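/- A continuous function f : [0,∞) → ℝ is operator convex if and only if for all positive integers n ≤ k, every isometry V : ℂ^n → ℂ^k (i.e. V*V = I_n) and every positive semidefinite k×k complex matrix A, one has f(V*AV) ≼ V*·f(A)·V in the Loewner order. -/

import Mathlib

open Matrix
open scoped Kronecker ComplexOrder

noncomputable section

/-- A probability vector on a finite set. -/
def ProbVec {X : Type*} [Fintype X] (p : X → ℝ) : Prop :=
  (∀ x, 0 ≤ p x) ∧ ∑ x, p x = 1

/-- A density matrix: positive semidefinite with trace one. -/
def IsDensityMatrix {n : ℕ} (ρ : Matrix (Fin n) (Fin n) ℂ) : Prop :=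
  ρ.PosSemidef ∧ ρ.trace = 1

/-- The action of a classical-to-quantum channel, given by a family of density
matrices `ρ`, on a probability vector `p`. -/
def cqApply {X : Type*} [Fintype X] {n : ℕ} (ρ : X → Matrix (Fin n) (Fin n) ℂ)
    (p : X → ℝ) : Matrix (Fin n) (Fin n) ℂ :=
  ∑ x, (p x : ℂ) • ρ x

/-- The recession slope `lim_{λ → ∞} f(λ)/λ`, as an extended real number.
(For convex continuous `f` the limit exists and equals this limsup.) -/
def recessionSlope (f : ℝ → ℝ) : EReal :=
  Filter.limsup (fun lam : ℝ => ((f lam / lam : ℝ) : EReal)) Filter.atTop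

/-- The `f`-divergence of two probability vectors, valued in `ℝ ∪ {+∞}`
(with the convention `0 * ∞ = 0`, which holds for `EReal` multiplication). -/
def fDiv {X : Type*} [Fintype X] (f : ℝ → ℝ) (p0 p1 : X → ℝ) : EReal :=
  ((∑ x, if 0 < p1 x then p1 x * f (p0 x / p1 x) else 0 : ℝ) : EReal)
    + ((∑ x, if 0 < p1 x then 0 else p0 x : ℝ) : EReal) * recessionSlope f

/-- The maximal `f`-divergence: the infimum of `D_f(q0‖q1)` over all classical
families mapped onto `(σ0, σ1)` by some classical-to-quantum channel. -/
def DfMax {n : ℕ} (f : ℝ → ℝ) (σ0 σ1 : Matrix (Fin n) (Fin n) ℂ) : EReal :=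
  sInf { d : EReal |
    ∃ (m : ℕ) (q0 q1 : Fin m → ℝ) (ρ : Fin m → Matrix (Fin n) (Fin n) ℂ),
      ProbVec q0 ∧ ProbVec q1 ∧ (∀ x, IsDensityMatrix (ρ x)) ∧
      cqApply ρ q0 = σ0 ∧ cqApply ρ q1 = σ1 ∧ d = fDiv f q0 q1 }

/-- Spectral functional calculus for Hermitian matrices (junk value `0` on
non-Hermitian input). -/
def hermCFC {n : ℕ} (f : ℝ → ℝ) (A : Matrix (Fin n) (Fin n) ℂ) :
    Matrix (Fin n) (Fin n) ℂ :=
  if hA : A.IsHermitian then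
    (hA.eigenvectorUnitary : Matrix (Fin n) (Fin n) ℂ) *
      Matrix.diagonal (fun i => (f (hA.eigenvalues i) : ℂ)) *
      (star (hA.eigenvectorUnitary : Matrix (Fin n) (Fin n) ℂ))
  else 0

/-- Spectral pseudo-inverse: invert the nonzero eigenvalues. -/
def pinvMat {n : ℕ} (A : Matrix (Fin n) (Fin n) ℂ) : Matrix (Fin n) (Fin n) ℂ :=
  hermCFC (fun x => if x = 0 then 0 else x⁻¹) A

/-- Orthogonal projection onto the range of a Hermitian matrix
(spectral projection onto the nonzero eigenvalues). -/
def rangeProj {n : ℕ} (A : Matrix (Fin n) (Fin n) ℂ) : Matrix (Fin n) (Fin n) ℂ :=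
  hermCFC (fun x => if x = 0 then 0 else 1) A

/-- `A ↦ (A⁺)^{1/2}`, the square root of the spectral pseudo-inverse. -/
def invSqrtMat {n : ℕ} (A : Matrix (Fin n) (Fin n) ℂ) : Matrix (Fin n) (Fin n) ℂ :=
  hermCFC (fun x => if x = 0 then 0 else (Real.sqrt x)⁻¹) A

/-- Generalized Schur complement of `σ0` with respect to a projection `π`:
`π σ0 π − π σ0 (1−π) · ((1−π) σ0 (1−π))⁺ · (1−π) σ0 π`. -/
def schurCompl {n : ℕ} (σ0 π : Matrix (Fin n) (Fin n) ℂ) :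
    Matrix (Fin n) (Fin n) ℂ :=
  π * σ0 * π -
    (π * σ0 * (1 - π)) * pinvMat ((1 - π) * σ0 * (1 - π)) * ((1 - π) * σ0 * π)

/-- `σ̃0`: the generalized Schur complement of `σ0` with respect to the
projection onto the range of `σ1`. -/
def sigmaTilde {n : ℕ} (σ0 σ1 : Matrix (Fin n) (Fin n) ℂ) :
    Matrix (Fin n) (Fin n) ℂ :=
  schurCompl σ0 (rangeProj σ1)

/-- The closed-form expression
`F_f(σ0,σ1) = tr σ1 f(σ1^{-1/2} σ̃0 σ1^{-1/2}) + (1 − tr σ̃0) L(f)`. -/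
def Ff {n : ℕ} (f : ℝ → ℝ) (σ0 σ1 : Matrix (Fin n) (Fin n) ℂ) : EReal :=
  (((σ1 * hermCFC f (invSqrtMat σ1 * sigmaTilde σ0 σ1 * invSqrtMat σ1)).trace.re : ℝ) : EReal)
    + ((1 - (sigmaTilde σ0 σ1).trace.re : ℝ) : EReal) * recessionSlope f

/-- Operator convexity of a function on `[0,∞)`, via the spectral functional
calculus on positive semidefinite complex matrices. -/
def OperatorConvex (f : ℝ → ℝ) : Prop :=
  ∀ (n : ℕ) (A B : Matrix (Fin n) (Fin n) ℂ), A.PosSemidef → B.PosSemidef →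
    ∀ t : ℝ, 0 ≤ t → t ≤ 1 →
      (t • hermCFC f A + (1 - t) • hermCFC f B
        - hermCFC f (t • A + (1 - t) • B)).PosSemidef

/-- A CPTP map between matrix algebras: trace preserving and with positive
semidefinite Choi matrix. -/
def IsCPTP {n k : ℕ}
    (Λ : Matrix (Fin n) (Fin n) ℂ →ₗ[ℂ] Matrix (Fin k) (Fin k) ℂ) : Prop :=
  (∀ A, (Λ A).trace = A.trace) ∧
    (∑ i : Fin n, ∑ j : Fin n,
      (Λ (Matrix.single i j 1)) ⊗ₖ (Matrix.single i j (1 : ℂ))).PosSemidef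

/-- The largest eigenvalue of a Hermitian matrix (junk value `0` otherwise). -/
def lmax {k : ℕ} (W : Matrix (Fin k) (Fin k) ℂ) : ℝ :=
  if h : W.IsHermitian then ⨆ i, h.eigenvalues i else 0

/-- A stochastic matrix (`P y x` is the probability of `y` given `x`). -/
def IsStochastic {X Y : Type*} [Fintype X] [Fintype Y] (P : Y → X → ℝ) : Prop :=
  (∀ y x, 0 ≤ P y x) ∧ ∀ x, ∑ y, P y x = 1

/-- The action of a stochastic matrix on a probability vector. -/
def stocApply {X Y : Type*} [Fintype X] [Fintype Y] (P : Y → X → ℝ)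
    (p : X → ℝ) : Y → ℝ :=
  fun y => ∑ x, P y x * p x

end

/-!
The functional calculus `hermCFC` is Mathlib's `cfc`, so it commutes with star-algebra
isomorphisms (unitary conjugation, reindexing) and acts blockwise on block-diagonal matrices.

(⇒) is the Hansen–Pedersen argument. An isometry `V` has the self-adjoint unitary dilation
`U = [[1 - VV*, V], [V*, 0]]`, and `M = U (A ⊕ 0) U` has lower right block `V*AV`. The pinching
`½ M + ½ SMS = M₁₁ ⊕ M₂₂`, with `S = 1 ⊕ (-1)`, is a midpoint of two unitary conjugates of `M`, so
operator convexity gives `f(M₁₁) ⊕ f(M₂₂) ≤ ½ f(M) + ½ S f(M) S`, whose lower right blocks read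
`f(V*AV) ≤ V* f(A) V`.

(⇐) The isometry `V = [√t; √(1-t)]` compresses `A ⊕ B` to `tA + (1-t)B` and `f(A) ⊕ f(B)` to
`t f(A) + (1-t) f(B)`.
-/

open Polynomial
open scoped MatrixOrder

lemma hermCFC_eq_cfc {n : ℕ} (f : ℝ → ℝ) (A : Matrix (Fin n) (Fin n) ℂ) :
    hermCFC f A = cfc f A := by
  by_cases hA : A.IsHermitian
  · rw [hermCFC, dif_pos hA, hA.cfc_eq, IsHermitian.cfc, Unitary.conjStarAlgAut_apply]
    rfl
  · rw [hermCFC, dif_neg hA]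
    exact (cfc_apply_of_not_predicate A hA).symm

section BlockMatrices

variable {ι κ κ' α : Type*}

lemma toBlocks₂₂_fromBlocks_mul_fromBlocks_mul_fromBlocks [Fintype ι] [Fintype κ] [Semiring α]
    (P Q X : Matrix κ κ α) (Y : Matrix ι ι α) (V : Matrix κ ι α) (W : Matrix ι κ α) :
    (fromBlocks P V W 0 * fromBlocks X 0 0 Y * fromBlocks Q V W 0).toBlocks₂₂ = W * X * V := by
  simp [fromBlocks_multiply]

lemma conjTranspose_fromRows_mul_fromBlocks_mul_fromRows [Fintype κ] [Fintype κ']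
    [CommSemiring α] [StarRing α] (P : Matrix κ ι α) (Q : Matrix κ' ι α)
    (X : Matrix κ κ α) (Y : Matrix κ' κ' α) :
    (fromRows P Q)ᴴ * fromBlocks X 0 0 Y * fromRows P Q = Pᴴ * X * P + Qᴴ * Y * Q := by
  rw [conjTranspose_fromRows_eq_fromCols_conjTranspose, fromCols_mul_fromBlocks,
    fromCols_mul_fromRows]
  simp

lemma fromBlocks_one_sub_mul_conjTranspose_mem_unitary [Fintype ι] [Fintype κ] [DecidableEq ι]
    [DecidableEq κ] [CommRing α] [StarRing α] {V : Matrix κ ι α} (hV : Vᴴ * V = 1) :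
    fromBlocks (1 - V * Vᴴ) V Vᴴ 0 ∈ unitary (Matrix (κ ⊕ ι) (κ ⊕ ι) α) := by
  have hVVV : V * Vᴴ * V = V := by rw [Matrix.mul_assoc, hV, Matrix.mul_one]
  rw [mem_unitaryGroup_iff, star_eq_conjTranspose, fromBlocks_conjTranspose,
    fromBlocks_multiply, ← fromBlocks_one]
  simp [Matrix.mul_sub, Matrix.sub_mul, ← Matrix.mul_assoc, hV, hVVV]

lemma half_smul_add_half_smul_conj_fromBlocks_one_neg_one [Fintype ι] [Fintype κ]
    [DecidableEq ι] [DecidableEq κ] (M : Matrix (κ ⊕ ι) (κ ⊕ ι) ℂ) :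
    (1 / 2 : ℝ) • M + (1 / 2 : ℝ) • (fromBlocks 1 0 0 (-1) * M * fromBlocks 1 0 0 (-1))
      = fromBlocks M.toBlocks₁₁ 0 0 M.toBlocks₂₂ := by
  conv_lhs => rw [← fromBlocks_toBlocks M]
  simp only [fromBlocks_multiply, fromBlocks_smul, fromBlocks_add]
  congr 1 <;> simp <;> module

variable {𝕜 : Type*} [RCLike 𝕜]

lemma toBlocks₂₂_mono : Monotone (toBlocks₂₂ : Matrix (κ ⊕ ι) (κ ⊕ ι) 𝕜 → Matrix ι ι 𝕜) := by
  intro M N h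
  rw [le_iff] at h ⊢
  exact h.submatrix Sum.inr

lemma Matrix.PosSemidef.fromBlocks_zero_zero [Fintype ι] [Fintype κ] [DecidableEq ι]
    [DecidableEq κ] {A : Matrix κ κ 𝕜} {B : Matrix ι ι 𝕜} (hA : A.PosSemidef)
    (hB : B.PosSemidef) : (fromBlocks A 0 0 B).PosSemidef := by
  let E₁ : Matrix κ (κ ⊕ ι) 𝕜 := fromCols 1 0
  let E₂ : Matrix ι (κ ⊕ ι) 𝕜 := fromCols 0 1
  have h : fromBlocks A 0 0 B = E₁ᴴ * A * E₁ + E₂ᴴ * B * E₂ := by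
    simp only [E₁, E₂, conjTranspose_fromCols_eq_fromRows_conjTranspose, fromRows_mul,
      mul_fromCols]
    ext (i | i) (j | j) <;> simp
  rw [h]
  exact (hA.conjTranspose_mul_mul_same _).add (hB.conjTranspose_mul_mul_same _)

end BlockMatrices

variable {ι κ : Type*} [Fintype ι] [DecidableEq ι] [Fintype κ] [DecidableEq κ]

section FunctionalCalculus

lemma Matrix.IsHermitian.map_cfc {F : Type*} [FunLike F (Matrix ι ι ℂ) (Matrix κ κ ℂ)]
    [AlgHomClass F ℝ (Matrix ι ι ℂ) (Matrix κ κ ℂ)]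
    [StarHomClass F (Matrix ι ι ℂ) (Matrix κ κ ℂ)]
    {A : Matrix ι ι ℂ} (hA : A.IsHermitian) (φ : F) (f : ℝ → ℝ) :
    φ (cfc f A) = cfc f (φ A) :=
  StarAlgHomClass.map_cfc φ f A (A.finite_real_spectrum.continuousOn f)
    (LinearMap.continuous_of_finiteDimensional (φ : Matrix ι ι ℂ →ₐ[ℝ] Matrix κ κ ℂ).toLinearMap)
    hA.isSelfAdjoint (hA.isSelfAdjoint.map φ)

noncomputable def reindexStarAlgEquiv (e : ι ≃ κ) : Matrix ι ι ℂ ≃⋆ₐ[ℝ] Matrix κ κ ℂ :=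
  StarAlgEquiv.ofAlgEquiv (reindexAlgEquiv ℝ ℂ e) fun M => (conjTranspose_reindex e e M).symm

@[simp]
lemma reindexStarAlgEquiv_apply (e : ι ≃ κ) (M : Matrix ι ι ℂ) :
    reindexStarAlgEquiv e M = reindex e e M :=
  rfl

lemma cfc_eq_aeval_interpolate (f : ℝ → ℝ) {A : Matrix ι ι ℂ} (hA : A.IsHermitian)
    {s : Finset ℝ} (hs : spectrum ℝ A ⊆ s) :
    cfc f A = aeval A (Lagrange.interpolate s id f) := by
  rw [← cfc_polynomial _ A hA.isSelfAdjoint]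
  refine cfc_congr fun x hx => ?_
  simpa using (Lagrange.eval_interpolate_at_node f (Set.injOn_id _) (hs hx)).symm

lemma aeval_fromBlocks_zero_zero {R α : Type*} [CommSemiring R] [Semiring α] [Algebra R α]
    (X : Matrix ι ι α) (Y : Matrix κ κ α) (p : R[X]) :
    aeval (fromBlocks X 0 0 Y) p = fromBlocks (aeval X p) 0 0 (aeval Y p) := by
  induction p using Polynomial.induction_on with
  | C r => simp [algebraMap_eq_diagonal, fromBlocks_diagonal]
  | add p q hp hq => simp [hp, hq, fromBlocks_add]
  | monomial n r ih =>
    rw [pow_succ, ← mul_assoc, map_mul, ih, aeval_X, fromBlocks_multiply]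
    simp

lemma cfc_fromBlocks_zero_zero (f : ℝ → ℝ) {X : Matrix ι ι ℂ} {Y : Matrix κ κ ℂ}
    (hX : X.IsHermitian) (hY : Y.IsHermitian) :
    cfc f (fromBlocks X 0 0 Y) = fromBlocks (cfc f X) 0 0 (cfc f Y) := by
  have hXY : (fromBlocks X 0 0 Y).IsHermitian := hX.fromBlocks (by simp) hY
  -- one polynomial interpolating `f` on all three spectra computes all three sides
  let s := ((X.finite_real_spectrum.union Y.finite_real_spectrum).union
    (fromBlocks X 0 0 Y).finite_real_spectrum).toFinset
  rw [cfc_eq_aeval_interpolate f hX (s := s) (by intro x; simp +contextual [s]),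
    cfc_eq_aeval_interpolate f hY (s := s) (by intro x; simp +contextual [s]),
    cfc_eq_aeval_interpolate f hXY (s := s) (by intro x; simp +contextual [s]),
    aeval_fromBlocks_zero_zero]

end FunctionalCalculus

lemma OperatorConvex.cfc_smul_add_smul_le {f : ℝ → ℝ} (hf : OperatorConvex f)
    {A B : Matrix ι ι ℂ} (hA : A.PosSemidef) (hB : B.PosSemidef) {t : ℝ} (ht₀ : 0 ≤ t)
    (ht₁ : t ≤ 1) :
    cfc f (t • A + (1 - t) • B) ≤ t • cfc f A + (1 - t) • cfc f B := by
  have hAB : 0 ≤ t • A + (1 - t) • B :=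
    add_nonneg (smul_nonneg ht₀ hA.nonneg) (smul_nonneg (sub_nonneg.2 ht₁) hB.nonneg)
  let φ := reindexStarAlgEquiv (Fintype.equivFin ι)
  have h := hf _ (φ A) (φ B) (map_nonneg φ hA.nonneg).posSemidef
    (map_nonneg φ hB.nonneg).posSemidef t ht₀ ht₁
  simp only [hermCFC_eq_cfc, ← le_iff] at h
  rwa [← hA.1.map_cfc φ, ← hB.1.map_cfc φ, ← map_smul, ← map_smul, ← map_add,
    ← map_smul, ← map_smul, ← map_add, ← hAB.posSemidef.1.map_cfc φ, map_le_map_iff] at h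

lemma OperatorConvex.cfc_toBlocks₂₂_le {f : ℝ → ℝ} (hf : OperatorConvex f)
    {M : Matrix (κ ⊕ ι) (κ ⊕ ι) ℂ} (hM : M.PosSemidef) :
    cfc f M.toBlocks₂₂ ≤ (cfc f M).toBlocks₂₂ := by
  let S : Matrix (κ ⊕ ι) (κ ⊕ ι) ℂ := fromBlocks 1 0 0 (-1)
  have hSS : Sᴴ = S := by simp [S, fromBlocks_conjTranspose]
  have hS : S ∈ unitary (Matrix (κ ⊕ ι) (κ ⊕ ι) ℂ) := by
    rw [mem_unitaryGroup_iff, star_eq_conjTranspose, hSS]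
    simp [S, fromBlocks_multiply]
  have hSMS : (S * M * S).PosSemidef := by simpa [hSS] using hM.mul_mul_conjTranspose_same S
  have h := hf.cfc_smul_add_smul_le hM hSMS (t := 1 / 2) (by norm_num) (by norm_num)
  have hconj := hM.1.map_cfc (Unitary.conjStarAlgAut ℝ _ ⟨S, hS⟩) f
  simp only [Unitary.conjStarAlgAut_apply, star_eq_conjTranspose, hSS] at hconj
  rw [show (1 : ℝ) - 1 / 2 = 1 / 2 by norm_num, ← hconj,
    half_smul_add_half_smul_conj_fromBlocks_one_neg_one,
    half_smul_add_half_smul_conj_fromBlocks_one_neg_one,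
    cfc_fromBlocks_zero_zero f (X := M.toBlocks₁₁) (Y := M.toBlocks₂₂) (hM.1.submatrix Sum.inl)
      (hM.1.submatrix Sum.inr)] at h
  simpa using toBlocks₂₂_mono h

def JensenOperatorIneq (f : ℝ → ℝ) (ι κ : Type*) [Fintype ι] [DecidableEq ι] [Fintype κ]
    [DecidableEq κ] : Prop :=
  ∀ V : Matrix κ ι ℂ, Vᴴ * V = 1 → ∀ A : Matrix κ κ ℂ, A.PosSemidef →
    cfc f (Vᴴ * A * V) ≤ Vᴴ * cfc f A * V

theorem OperatorConvex.jensenOperatorIneq {f : ℝ → ℝ} (hf : OperatorConvex f) :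
    JensenOperatorIneq f ι κ := by
  intro V hV A hA
  let U : Matrix (κ ⊕ ι) (κ ⊕ ι) ℂ := fromBlocks (1 - V * Vᴴ) V Vᴴ 0
  have hUU : Uᴴ = U := by simp [U, fromBlocks_conjTranspose]
  have hU : U ∈ unitary _ := fromBlocks_one_sub_mul_conjTranspose_mem_unitary hV
  have hA0 : (fromBlocks A 0 0 (0 : Matrix ι ι ℂ)).PosSemidef := hA.fromBlocks_zero_zero .zero
  have h := hf.cfc_toBlocks₂₂_le (by simpa [hUU] using hA0.mul_mul_conjTranspose_same U)
  have hconj := hA0.1.map_cfc (Unitary.conjStarAlgAut ℝ _ ⟨U, hU⟩) f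
  simp only [Unitary.conjStarAlgAut_apply, star_eq_conjTranspose, hUU] at hconj
  rwa [← hconj, cfc_fromBlocks_zero_zero f hA.1 isHermitian_zero,
    toBlocks₂₂_fromBlocks_mul_fromBlocks_mul_fromBlocks,
    toBlocks₂₂_fromBlocks_mul_fromBlocks_mul_fromBlocks] at h

theorem JensenOperatorIneq.of_equiv {f : ℝ → ℝ} {κ' : Type*} [Fintype κ'] [DecidableEq κ']
    (h : JensenOperatorIneq f ι κ') (e : κ ≃ κ') : JensenOperatorIneq f ι κ := by
  intro V hV A hA
  let φ := reindexStarAlgEquiv e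
  have hV' : (reindex e (.refl ι) V)ᴴ * reindex e (.refl ι) V = 1 := by
    simpa [conjTranspose_reindex, submatrix_mul_equiv] using hV
  have := h _ hV' (φ A) (map_nonneg φ hA.nonneg).posSemidef
  rw [← hA.1.map_cfc φ] at this
  simpa [φ, conjTranspose_reindex, submatrix_mul_equiv] using this

theorem JensenOperatorIneq.cfc_smul_add_smul_le {f : ℝ → ℝ} (h : JensenOperatorIneq f ι (ι ⊕ ι))
    {A B : Matrix ι ι ℂ} (hA : A.PosSemidef) (hB : B.PosSemidef) {t : ℝ} (ht₀ : 0 ≤ t)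
    (ht₁ : t ≤ 1) :
    cfc f (t • A + (1 - t) • B) ≤ t • cfc f A + (1 - t) • cfc f B := by
  let V : Matrix (ι ⊕ ι) ι ℂ := fromRows (√t • 1) (√(1 - t) • 1)
  have hV : ∀ X Y : Matrix ι ι ℂ, Vᴴ * fromBlocks X 0 0 Y * V = t • X + (1 - t) • Y := by
    intro X Y
    simp [V, conjTranspose_fromRows_mul_fromBlocks_mul_fromRows, smul_smul,
      Real.mul_self_sqrt ht₀, Real.mul_self_sqrt (sub_nonneg.2 ht₁)]
  have hV₁ : Vᴴ * V = 1 := by simpa [← add_smul] using hV 1 1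
  have := h V hV₁ _ (hA.fromBlocks_zero_zero hB)
  rwa [cfc_fromBlocks_zero_zero f hA.1 hB.1, hV, hV] at this

theorem operatorConvex_iff_isometry_compression_general (f : ℝ → ℝ) :
    OperatorConvex f ↔
      ∀ (n k : ℕ), 0 < n → n ≤ k →
        ∀ V : Matrix (Fin k) (Fin n) ℂ, Vᴴ * V = 1 →
          ∀ A : Matrix (Fin k) (Fin k) ℂ, A.PosSemidef →
            (Vᴴ * hermCFC f A * V - hermCFC f (Vᴴ * A * V)).PosSemidef := by
  simp only [hermCFC_eq_cfc, ← le_iff]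
  refine ⟨fun hf n k _ _ => hf.jensenOperatorIneq, fun H n A B hA hB t ht₀ ht₁ => ?_⟩
  rw [hermCFC_eq_cfc, hermCFC_eq_cfc, hermCFC_eq_cfc, ← le_iff]
  rcases n.eq_zero_or_pos with rfl | hn
  · exact le_of_subsingleton
  have hJ : JensenOperatorIneq f (Fin n) (Fin n ⊕ Fin n) :=
    JensenOperatorIneq.of_equiv (H n (n + n) hn (Nat.le_add_right n n)) finSumFinEquiv
  exact hJ.cfc_smul_add_smul_le hA hB ht₀ ht₁

/-- A continuous `f : [0,∞) → ℝ` is operator convex iff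
`f(V*AV) ≼ V* f(A) V` for every isometry `V : ℂ^n → ℂ^k` (`n ≤ k`) and every
positive semidefinite `A`. -/
theorem operatorConvex_iff_isometry_compression (f : ℝ → ℝ)
    (hf : ContinuousOn f (Set.Ici 0)) :
    OperatorConvex f ↔
      ∀ (n k : ℕ), 0 < n → n ≤ k →
        ∀ V : Matrix (Fin k) (Fin n) ℂ, Vᴴ * V = 1 →
          ∀ A : Matrix (Fin k) (Fin k) ℂ, A.PosSemidef →
            (Vᴴ * hermCFC f A * V - hermCFC f (Vᴴ * A * V)).PosSemidef :=
  operatorConvex_iff_isometry_compression_general f
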